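/- arXiv:1807.01240 — 2 statements merged into one kernel-verified Lean document; each statement's English description precedes it below -/
import Mathlib

section
/- For all cache algorithms P and Q, all lengths l, and all pairs of Q-equivalent traces t1, t2 ∈ B^l, the difference in misses under P is bounded by the leak ratio: P(t2) − P(t1) ≤ r_{P,Q}(l) − 1. -/
structure CacheAlg (B : Type) where
  S : Type
  init : S
  n : ℕ
  tr : S → Fin n → S
  evict : S → B → S × Fin n

variable {B : Type} [DecidableEq B]

abbrev CacheAlg.Config (P : CacheAlg B) := P.S × (Fin P.n → Option B)

noncomputable def CacheAlg.upd (P : CacheAlg B) (g : P.Config) (b : B) : P.Config :=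
  if h : ∃ j, g.2 j = some b then (P.tr g.1 h.choose, g.2)
  else ((P.evict g.1 b).1, Function.update g.2 (P.evict g.1 b).2 (some b))

noncomputable def CacheAlg.updTrace (P : CacheAlg B) (g : P.Config) : List B → P.Config
  | [] => g
  | b :: t => P.updTrace (P.upd g b) t

noncomputable def CacheAlg.missesFrom (P : CacheAlg B) (g : P.Config) : List B → ℕ
  | [] => 0
  | b :: t => (if ∃ j, g.2 j = some b then 0 else 1) + P.missesFrom (P.upd g b) t

def CacheAlg.initConfig (P : CacheAlg B) : P.Config := (P.init, fun _ => none)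

/-- Number of misses of `P` on trace `t` from the empty initial configuration. -/
noncomputable def CacheAlg.misses (P : CacheAlg B) (t : List B) : ℕ := P.missesFrom P.initConfig t

/-- The leak ratio `r_{P,Q}(l)`: supremum over sets `T` of traces of length `l`
of `|P(T)| / |Q(T)|`. -/
noncomputable def leakRatio (P Q : CacheAlg B) (l : ℕ) : ℝ :=
  sSup {r : ℝ | ∃ T : Finset (List B), T.Nonempty ∧ (∀ t ∈ T, t.length = l) ∧
    r = ((T.image P.misses).card : ℝ) / ((T.image Q.misses).card : ℝ)}

/-- Lifting of a bijection on blocks to cache contents, mapping `⊥` to `⊥`. -/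
def renameContent (π : B ≃ B) {n : ℕ} (c : Fin n → Option B) : Fin n → Option B :=
  fun j => (c j).map π

/-- Lifting of a bijection on blocks to cache configurations. -/
def CacheAlg.renameConfig (P : CacheAlg B) (π : B ≃ B) (g : P.Config) : P.Config :=
  (g.1, renameContent π g.2)

/-- The eviction function is independent of the accessed block. -/
def CacheAlg.EvictBlockIndep (P : CacheAlg B) : Prop :=
  ∀ (s : P.S) (b b' : B), P.evict s b = P.evict s b'

/-- Congruence of pairs of cache configurations via a simultaneous renaming. -/
def CacheCongruent (P Q : CacheAlg B) (x y : P.Config × Q.Config) : Prop :=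
  ∃ π : B ≃ B, P.renameConfig π x.1 = y.1 ∧ Q.renameConfig π x.2 = y.2

/-!
Within a Q-equivalence class of traces of length `l`, the P-miss counts form an interval. Follow a
trace `t` for some steps and then switch to accesses that hit in both caches (a block cached by
both) or miss in both (a block cached by neither, which exists because `B` outnumbers the two
caches together): this realises every P-miss count between `Q(t)` and `P(t)` with Q-miss count
`Q(t)`. So the class of `t₁, t₂` contains a set `T` with `|Q(T)| = 1` and
`|P(T)| = |P(t₂) - P(t₁)| + 1`.
-/

namespace CacheAlg

abbrev Contains (P : CacheAlg B) (g : P.Config) (b : B) : Prop := ∃ j, g.2 j = some b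

variable (P Q : CacheAlg B)

theorem missesFrom_cons (g : P.Config) (b : B) (t : List B) :
    P.missesFrom g (b :: t) = (if P.Contains g b then 0 else 1) + P.missesFrom (P.upd g b) t :=
  rfl

theorem exists_le_one_missesFrom_cons (g : P.Config) (b : B) :
    ∃ i ≤ 1, ∀ t, P.missesFrom g (b :: t) = i + P.missesFrom (P.upd g b) t :=
  ⟨_, by split_ifs <;> omega, P.missesFrom_cons g b⟩

theorem missesFrom_le_length (g : P.Config) (t : List B) : P.missesFrom g t ≤ t.length := by
  induction t generalizing g with
  | nil => exact le_rfl
  | cons b t ih =>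
    obtain ⟨i, hi, hcons⟩ := P.exists_le_one_missesFrom_cons g b
    rw [hcons, List.length_cons]
    have := ih (P.upd g b)
    omega

theorem misses_le_length (t : List B) : P.misses t ≤ t.length :=
  P.missesFrom_le_length _ t

omit [DecidableEq B] in
theorem not_contains_initConfig (b : B) : ¬ P.Contains P.initConfig b := by
  simp [initConfig]

theorem misses_cons (b : B) (t : List B) :
    P.misses (b :: t) = 1 + P.missesFrom (P.upd P.initConfig b) t := by
  rw [misses, missesFrom_cons, if_neg (P.not_contains_initConfig b)]

theorem contains_upd_self (g : P.Config) (b : B) : P.Contains (P.upd g b) b := by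
  unfold upd
  split_ifs with h
  · exact h
  · exact ⟨(P.evict g.1 b).2, Function.update_self ..⟩

omit [DecidableEq B] in
theorem exists_not_contains_and_not_contains (hB : (P.n + Q.n : Cardinal) < Cardinal.mk B)
    (gP : P.Config) (gQ : Q.Config) : ∃ b, ¬ P.Contains gP b ∧ ¬ Q.Contains gQ b := by
  set f : Fin P.n ⊕ Fin Q.n → Option B := Sum.elim gP.2 gQ.2
  have hnot : ¬ Set.range some ⊆ Set.range f := fun hsub => by
    have hle := (Cardinal.mk_range_eq _ (Option.some_injective B)).symm.le.trans
      ((Cardinal.mk_le_mk_of_subset hsub).trans Cardinal.mk_range_le)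
    simp only [Cardinal.mk_fintype, Fintype.card_sum, Fintype.card_fin, Nat.cast_add] at hle
    exact hle.not_gt hB
  obtain ⟨_, ⟨b, rfl⟩, hb⟩ := Set.not_subset.mp hnot
  exact ⟨b, fun ⟨j, hj⟩ => hb ⟨.inl j, hj⟩, fun ⟨j, hj⟩ => hb ⟨.inr j, hj⟩⟩

theorem exists_missesFrom_eq_of_le (hB : (P.n + Q.n : Cardinal) < Cardinal.mk B)
    {gP : P.Config} {gQ : Q.Config} (hcommon : ∃ b, P.Contains gP b ∧ Q.Contains gQ b)
    {a k : ℕ} (hak : a ≤ k) :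
    ∃ u : List B, u.length = k ∧ P.missesFrom gP u = a ∧ Q.missesFrom gQ u = a := by
  induction k generalizing a gP gQ with
  | zero => exact ⟨[], rfl, (Nat.le_zero.mp hak).symm, (Nat.le_zero.mp hak).symm⟩
  | succ k ih =>
    cases a with
    | zero =>
      obtain ⟨b, hbP, hbQ⟩ := hcommon
      obtain ⟨u, hu, hPu, hQu⟩ :=
        ih ⟨b, P.contains_upd_self gP b, Q.contains_upd_self gQ b⟩ k.zero_le
      exact ⟨b :: u, by simp [hu], by rw [missesFrom_cons, if_pos hbP, hPu],
        by rw [missesFrom_cons, if_pos hbQ, hQu]⟩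
    | succ a =>
      obtain ⟨b, hbP, hbQ⟩ := P.exists_not_contains_and_not_contains Q hB gP gQ
      obtain ⟨u, hu, hPu, hQu⟩ :=
        ih ⟨b, P.contains_upd_self gP b, Q.contains_upd_self gQ b⟩ (Nat.le_of_succ_le_succ hak)
      exact ⟨b :: u, by simp [hu], by rw [missesFrom_cons, if_neg hbP, hPu, add_comm],
        by rw [missesFrom_cons, if_neg hbQ, hQu, add_comm]⟩

theorem exists_missesFrom_eq_of_between (hB : (P.n + Q.n : Cardinal) < Cardinal.mk B)
    {gP : P.Config} {gQ : Q.Config} (hcommon : ∃ b, P.Contains gP b ∧ Q.Contains gQ b)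
    (t : List B) {p : ℕ} (hp : min (Q.missesFrom gQ t) (P.missesFrom gP t) ≤ p)
    (hp' : p ≤ max (Q.missesFrom gQ t) (P.missesFrom gP t)) :
    ∃ u : List B, u.length = t.length ∧
      Q.missesFrom gQ u = Q.missesFrom gQ t ∧ P.missesFrom gP u = p := by
  induction t generalizing gP gQ p with
  | nil => exact ⟨[], rfl, rfl, by simp_all [missesFrom]⟩
  | cons b r ih =>
    by_cases hpQ : p = Q.missesFrom gQ (b :: r)
    · obtain ⟨u, hu, hPu, hQu⟩ := P.exists_missesFrom_eq_of_le Q hB hcommon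
        (Q.missesFrom_le_length gQ (b :: r))
      exact ⟨u, hu, hQu, hPu.trans hpQ.symm⟩
    · obtain ⟨iP, hiP, hP⟩ := P.exists_le_one_missesFrom_cons gP b
      obtain ⟨iQ, hiQ, hQ⟩ := Q.exists_le_one_missesFrom_cons gQ b
      rw [hP, hQ] at hp hp'
      rw [hQ] at hpQ
      obtain ⟨u, hu, hQu, hPu⟩ := ih ⟨b, P.contains_upd_self gP b, Q.contains_upd_self gQ b⟩
        (p := p - iP) (by omega) (by omega)
      exact ⟨b :: u, by simp [hu], by rw [hQ, hQ, hQu], by rw [hP, hPu]; omega⟩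

theorem exists_misses_eq_of_between (hB : (P.n + Q.n : Cardinal) < Cardinal.mk B)
    (t : List B) {p : ℕ} (hp : min (Q.misses t) (P.misses t) ≤ p)
    (hp' : p ≤ max (Q.misses t) (P.misses t)) :
    ∃ u : List B, u.length = t.length ∧ Q.misses u = Q.misses t ∧ P.misses u = p := by
  cases t with
  | nil => exact ⟨[], rfl, rfl, by simp_all [misses, missesFrom]⟩
  | cons b r =>
    rw [P.misses_cons, Q.misses_cons] at hp hp'
    obtain ⟨u, hu, hQu, hPu⟩ := P.exists_missesFrom_eq_of_between Q hB
      ⟨b, P.contains_upd_self P.initConfig b, Q.contains_upd_self Q.initConfig b⟩ r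
      (p := p - 1) (by omega) (by omega)
    exact ⟨b :: u, by simp [hu], by rw [Q.misses_cons, Q.misses_cons, hQu],
      by rw [P.misses_cons, hPu]; omega⟩

theorem exists_misses_eq_of_misses_eq (hB : (P.n + Q.n : Cardinal) < Cardinal.mk B)
    {l : ℕ} {t₁ t₂ : List B} (ht₁ : t₁.length = l) (ht₂ : t₂.length = l)
    (hQ : Q.misses t₁ = Q.misses t₂) {p : ℕ} (hp : min (P.misses t₁) (P.misses t₂) ≤ p)
    (hp' : p ≤ max (P.misses t₁) (P.misses t₂)) :
    ∃ u : List B, u.length = l ∧ Q.misses u = Q.misses t₁ ∧ P.misses u = p := by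
  -- both intervals between `Q(tᵢ)` and `P(tᵢ)` contain `Q(t₁)`, so they cover `[P(t₁), P(t₂)]`
  rcases (by omega : (min (Q.misses t₁) (P.misses t₁) ≤ p ∧ p ≤ max (Q.misses t₁) (P.misses t₁)) ∨
      (min (Q.misses t₂) (P.misses t₂) ≤ p ∧ p ≤ max (Q.misses t₂) (P.misses t₂))) with h | h
  · obtain ⟨u, hu, hQu, hPu⟩ := P.exists_misses_eq_of_between Q hB t₁ h.1 h.2
    exact ⟨u, hu.trans ht₁, hQu, hPu⟩
  · obtain ⟨u, hu, hQu, hPu⟩ := P.exists_misses_eq_of_between Q hB t₂ h.1 h.2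
    exact ⟨u, hu.trans ht₂, hQu.trans hQ.symm, hPu⟩

end CacheAlg

theorem div_le_leakRatio (P Q : CacheAlg B) {l : ℕ} {T : Finset (List B)} (hT : T.Nonempty)
    (hl : ∀ t ∈ T, t.length = l) :
    ((T.image P.misses).card : ℝ) / (T.image Q.misses).card ≤ leakRatio P Q l := by
  refine le_csSup ⟨l + 1, ?_⟩ ⟨T, hT, hl, rfl⟩
  rintro _ ⟨T', hT', hl', rfl⟩
  have hPcard : (T'.image P.misses).card ≤ l + 1 := by
    calc (T'.image P.misses).card ≤ (Finset.range (l + 1)).card := by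
          refine Finset.card_le_card fun y hy => ?_
          obtain ⟨t, ht, rfl⟩ := Finset.mem_image.mp hy
          exact Finset.mem_range_succ_iff.mpr (hl' t ht ▸ P.misses_le_length t)
      _ = l + 1 := Finset.card_range _
  have hQcard : (1 : ℝ) ≤ (T'.image Q.misses).card := by
    exact_mod_cast (hT'.image _).card_pos
  calc ((T'.image P.misses).card : ℝ) / (T'.image Q.misses).card
      ≤ (T'.image P.misses).card := div_le_self (by positivity) hQcard
    _ ≤ l + 1 := by exact_mod_cast hPcard

theorem card_le_leakRatio (P Q : CacheAlg B) {l c : ℕ} {S : Finset ℕ} (hS : S.Nonempty)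
    (h : ∀ p ∈ S, ∃ u : List B, u.length = l ∧ Q.misses u = c ∧ P.misses u = p) :
    (S.card : ℝ) ≤ leakRatio P Q l := by
  choose! f hfl hfQ hfP using h
  have hPimg : (S.image f).image P.misses = S := by
    rw [Finset.image_image, Finset.image_congr (f := P.misses ∘ f) (g := id) hfP,
      Finset.image_id]
  have hQimg : (S.image f).image Q.misses = {c} := by
    rw [Finset.image_image, Finset.image_congr (f := Q.misses ∘ f) (g := fun _ => c) hfQ,
      Finset.image_const hS]
  have hlen : ∀ t ∈ S.image f, t.length = l := by
    simpa only [Finset.forall_mem_image] using hfl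
  simpa [hPimg, hQimg] using div_le_leakRatio P Q (hS.image f) hlen

theorem miss_diff_le_leakRatio (P Q : CacheAlg B)
    (hB : (P.n + Q.n : Cardinal) < Cardinal.mk B)
    (l : ℕ) (t1 t2 : List B) (ht1 : t1.length = l) (ht2 : t2.length = l)
    (hQeq : Q.misses t1 = Q.misses t2) :
    (P.misses t2 : ℝ) - (P.misses t1 : ℝ) ≤ leakRatio P Q l - 1 := by
  set m := min (P.misses t1) (P.misses t2)
  set M := max (P.misses t1) (P.misses t2)
  have hcard : ((Finset.Icc m M).card : ℝ) ≤ leakRatio P Q l :=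
    card_le_leakRatio P Q (Finset.nonempty_Icc.mpr min_le_max) fun p hp =>
      P.exists_misses_eq_of_misses_eq Q hB ht1 ht2 hQeq (Finset.mem_Icc.mp hp).1
        (Finset.mem_Icc.mp hp).2
  have hdiff : P.misses t2 + 1 ≤ (Finset.Icc m M).card + P.misses t1 := by
    rw [Nat.card_Icc]
    omega
  have hdiff' : (P.misses t2 : ℝ) + 1 ≤ (Finset.Icc m M).card + P.misses t1 := by
    exact_mod_cast hdiff
  linarith
end

section
/- Under the same renaming setup: for every configuration (s,c), every trace t, and every bijection π on blocks, the number of misses is invariant under renaming: P((s,c), t) = P(π*(s,c), π*(t)). -/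
variable {B : Type} [DecidableEq B]

/-! Renaming commutes with a single update: on a hit the renamed content hits at the same lines,
and on a miss the evicted line is the same because eviction ignores the requested block. Hits are
preserved by renaming too, so the miss counts agree by induction on the trace. -/

omit [DecidableEq B] in
theorem renameContent_apply_eq_some_iff (π : B ≃ B) {n : ℕ} (c : Fin n → Option B) (b : B)
    (j : Fin n) : renameContent π c j = some (π b) ↔ c j = some b := by
  simp [renameContent]

omit [DecidableEq B] in
theorem renameContent_update (π : B ≃ B) {n : ℕ} (c : Fin n → Option B) (j : Fin n) (b : B) :
    renameContent π (Function.update c j (some b)) =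
      Function.update (renameContent π c) j (some (π b)) := by
  funext i
  by_cases hi : i = j <;> simp [renameContent, hi]

theorem CacheAlg.renameConfig_upd (P : CacheAlg B) (hP : P.EvictBlockIndep) (π : B ≃ B)
    (g : P.Config) (b : B) :
    P.renameConfig π (P.upd g b) = P.upd (P.renameConfig π g) (π b) := by
  have hit : (fun j => renameContent π g.2 j = some (π b)) = fun j => g.2 j = some b :=
    funext fun j => propext (renameContent_apply_eq_some_iff π g.2 b j)
  by_cases h : ∃ j, g.2 j = some b
  · have h' : ∃ j, renameContent π g.2 j = some (π b) := hit ▸ h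
    have hchoose : h'.choose = h.choose := by simp only [hit]
    simp only [upd, renameConfig, dif_pos h, dif_pos h', hchoose]
  · have h' : ¬∃ j, renameContent π g.2 j = some (π b) := hit ▸ h
    simp only [upd, renameConfig, dif_neg h, dif_neg h', hP g.1 (π b) b, renameContent_update]

theorem misses_rename_invariant (P : CacheAlg B) (hEvict : P.EvictBlockIndep)
    (π : B ≃ B) (g : P.Config) (t : List B) :
    P.missesFrom g t = P.missesFrom (P.renameConfig π g) (t.map π) := by
  induction t generalizing g with
  | nil => rfl
  | cons b t ih =>
    simp only [List.map_cons, CacheAlg.missesFrom, ← P.renameConfig_upd hEvict, ← ih]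
    simp only [CacheAlg.renameConfig, renameContent_apply_eq_some_iff]
end
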